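/- Let 0 ≤ θ ≤ 1/2, q > −1 and η > 0. Then there exist a constant C > 0 (depending on η, θ, q) and T > 0 such that ∫₀^η (1 + r^(2−2θ))^(−t) r^q dr ≥ C t^(−(q+1)/(2(1−θ))) for all t ≥ T. -/

import Mathlib

/-!
Put `p = 2 - 2θ > 0`. On `[0, a]` with `a = t ^ (-1/p)` one has `r ^ p ≤ 1/t`, so
`(1 + r ^ p) ^ (-t) ≥ exp (-1/t) ^ t = exp (-1)` there. Dropping the (nonnegative) rest of the
integral leaves `exp (-1) ∫₀ᵃ r ^ q dr = exp (-1) a ^ (q + 1) / (q + 1)`, and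
`a ^ (q + 1) = t ^ (-(q + 1)/p)`; the cutoff `a` lies in `[0, η]` as soon as `t ≥ η ^ (-p)`.
-/

open Real Set MeasureTheory

lemma exp_neg_one_le_one_add_rpow_neg {t u : ℝ} (ht : 0 < t) (hu : 0 ≤ u) (hut : u ≤ t⁻¹) :
    exp (-1) ≤ (1 + u) ^ (-t) := by
  have hexp : 1 + u ≤ exp t⁻¹ := by linarith [add_one_le_exp t⁻¹]
  calc exp (-1) = exp t⁻¹ ^ (-t) := by rw [← exp_mul]; field_simp
    _ ≤ (1 + u) ^ (-t) := rpow_le_rpow_of_nonpos (by linarith) hexp (by linarith)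

section

variable {p q t : ℝ}

lemma continuousOn_one_add_rpow_rpow_neg (hp : 0 ≤ p) (t : ℝ) :
    ContinuousOn (fun r : ℝ => (1 + r ^ p) ^ (-t)) (Ici 0) := by
  refine ContinuousOn.rpow_const ?_ fun r hr => Or.inl ?_
  · exact continuousOn_const.add (continuous_rpow_const hp).continuousOn
  · have := rpow_nonneg (mem_Ici.mp hr) p
    positivity

lemma intervalIntegrable_one_add_rpow_rpow_neg_mul_rpow (hp : 0 ≤ p) (hq : -1 < q) (t : ℝ)
    {b : ℝ} (hb : 0 ≤ b) :
    IntervalIntegrable (fun r : ℝ => (1 + r ^ p) ^ (-t) * r ^ q) volume 0 b :=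
  (intervalIntegral.intervalIntegrable_rpow' hq).continuousOn_mul <|
    (continuousOn_one_add_rpow_rpow_neg hp t).mono (by simp [uIcc_of_le hb, Icc_subset_Ici_self])

lemma exp_neg_one_div_mul_rpow_le_integral (hp : 0 ≤ p) (hq : -1 < q) (ht : 0 < t) {a b : ℝ}
    (ha : 0 ≤ a) (hab : a ≤ b) (hapt : a ^ p ≤ t⁻¹) :
    exp (-1) / (q + 1) * a ^ (q + 1) ≤ ∫ r in (0 : ℝ)..b, (1 + r ^ p) ^ (-t) * r ^ q := by
  have hpointwise : ∀ r ∈ Icc (0 : ℝ) a, exp (-1) * r ^ q ≤ (1 + r ^ p) ^ (-t) * r ^ q :=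
    fun r hr => mul_le_mul_of_nonneg_right
      (exp_neg_one_le_one_add_rpow_neg ht (rpow_nonneg hr.1 p)
        ((rpow_le_rpow hr.1 hr.2 hp).trans hapt))
      (rpow_nonneg hr.1 q)
  have hnonneg : ∀ r ∈ Ioc (0 : ℝ) b, 0 ≤ (1 + r ^ p) ^ (-t) * r ^ q := fun r hr => by
    have := rpow_nonneg hr.1.le p
    have := rpow_nonneg hr.1.le q
    positivity
  calc exp (-1) / (q + 1) * a ^ (q + 1) = ∫ r in (0 : ℝ)..a, exp (-1) * r ^ q := by
        rw [intervalIntegral.integral_const_mul, integral_rpow (Or.inl hq), zero_rpow (by linarith)]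
        ring
    _ ≤ ∫ r in (0 : ℝ)..a, (1 + r ^ p) ^ (-t) * r ^ q :=
        intervalIntegral.integral_mono_on ha
          ((intervalIntegral.intervalIntegrable_rpow' hq).const_mul _)
          (intervalIntegrable_one_add_rpow_rpow_neg_mul_rpow hp hq t ha) hpointwise
    _ ≤ ∫ r in (0 : ℝ)..b, (1 + r ^ p) ^ (-t) * r ^ q :=
        intervalIntegral.integral_mono_interval le_rfl ha hab
          ((ae_restrict_iff' measurableSet_Ioc).mpr (.of_forall hnonneg))
          (intervalIntegrable_one_add_rpow_rpow_neg_mul_rpow hp hq t (ha.trans hab))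

lemma exp_neg_one_div_mul_rpow_neg_div_le_integral (hp : 0 < p) (hq : -1 < q) (ht : 0 < t) {b : ℝ}
    (hb : t ^ (-p)⁻¹ ≤ b) :
    exp (-1) / (q + 1) * t ^ (-(q + 1) / p) ≤
      ∫ r in (0 : ℝ)..b, (1 + r ^ p) ^ (-t) * r ^ q := by
  have hcutoff_pow : (t ^ (-p)⁻¹) ^ p = t⁻¹ := by
    rw [← inv_inj, ← rpow_neg (rpow_nonneg ht.le _), rpow_inv_rpow ht.le (by linarith), inv_inv]
  have hcutoff_pow_succ : (t ^ (-p)⁻¹) ^ (q + 1) = t ^ (-(q + 1) / p) := by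
    rw [← rpow_mul ht.le]
    ring_nf
  have := exp_neg_one_div_mul_rpow_le_integral hp.le hq ht (rpow_nonneg ht.le _) hb hcutoff_pow.le
  rwa [hcutoff_pow_succ] at this

end

theorem lower_bound_small_eta_general (θ q η : ℝ) (hθ' : θ ≤ 1/2) (hq : -1 < q)
    (hη : 0 < η) :
    ∃ C T : ℝ, 0 < C ∧ 0 < T ∧
      ∀ t : ℝ, T ≤ t →
        C * t ^ (-(q+1)/(2*(1-θ))) ≤ ∫ r in (0:ℝ)..η, (1 + r ^ (2 - 2*θ)) ^ (-t) * r ^ q := by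
  have hp : 0 < 2 - 2 * θ := by linarith
  refine ⟨exp (-1) / (q + 1), η ^ (-(2 - 2 * θ)), div_pos (exp_pos _) (by linarith),
    rpow_pos_of_pos hη _, fun t ht => ?_⟩
  have ht0 : 0 < t := (rpow_pos_of_pos hη _).trans_le ht
  have hcutoff : t ^ (-(2 - 2 * θ))⁻¹ ≤ η := by
    calc t ^ (-(2 - 2 * θ))⁻¹ ≤ (η ^ (-(2 - 2 * θ))) ^ (-(2 - 2 * θ))⁻¹ :=
          rpow_le_rpow_of_nonpos (rpow_pos_of_pos hη _) ht (by simpa using hp.le)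
      _ = η := rpow_rpow_inv hη.le (by linarith)
  rw [show 2 * (1 - θ) = 2 - 2 * θ by ring]
  exact exp_neg_one_div_mul_rpow_neg_div_le_integral hp hq ht0 hcutoff

theorem lower_bound_small_eta (θ q η : ℝ) (hθ : 0 ≤ θ) (hθ' : θ ≤ 1/2) (hq : -1 < q)
    (hη : 0 < η) :
    ∃ C T : ℝ, 0 < C ∧ 0 < T ∧
      ∀ t : ℝ, T ≤ t →
        C * t ^ (-(q+1)/(2*(1-θ))) ≤ ∫ r in (0:ℝ)..η, (1 + r ^ (2 - 2*θ)) ^ (-t) * r ^ q :=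
  lower_bound_small_eta_general θ q η hθ' hq hη
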